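/- Let A be a bal-algebra and I an ℓ-ideal of A. If the archimedean hull ar(I) equals A, then I = A. -/

import Mathlib

/-!
Let `J` be the set of `a` such that for every `ε > 0` some `b ∈ I` has `|a| ≤ b + ε`, the uniform
closure of `I`. Since `1` is a strong unit, every `c` satisfies `|c| ≤ K` for a real `K`, so `J` is
an ideal; it is an ℓ-ideal containing `I`. It is archimedean: if `(n a - b)⁺ ∈ J` for all `n`,
pick `c ∈ I` with `(n a - b)⁺ ≤ c + 1`; then `a⁺ ≤ ((n a - b)⁺ + |b|) / n ≤ c / n + (1 + K) / n`
when `|b| ≤ K`, and `n` can be taken large. Hence `ar(I) ⊆ J`, so `1 ∈ J`: some `b ∈ I` has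
`1 ≤ b + 1/2`, whence `1 ≤ 2b` and `1 ∈ I`.
-/

/-- A bounded archimedean ℓ-algebra (bal-algebra): a commutative ℝ-algebra with a
lattice order compatible with addition and multiplication, in which the algebra
map from ℝ is order-preserving, `1` is a strong order unit, and the order is
archimedean. -/
structure IsBal (A : Type*) [CommRing A] [Lattice A] [Algebra ℝ A] : Prop where
  add_le_add_right : ∀ a b : A, a ≤ b → ∀ c : A, a + c ≤ b + c
  mul_nonneg : ∀ a b : A, 0 ≤ a → 0 ≤ b → 0 ≤ a * b
  algebraMap_mono : Monotone (algebraMap ℝ A)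
  strong_unit : ∀ a : A, ∃ n : ℕ, 1 ≤ n ∧ a ≤ n • (1 : A)
  arch : ∀ a b : A, (∀ n : ℕ, 1 ≤ n → n • a ≤ b) → a ≤ 0

/-- An ℓ-ideal: a ring ideal `I` such that `|a| ≤ |b|` and `b ∈ I` imply `a ∈ I`,
where `|a| = a ⊔ (-a)`. -/
def IsLIdeal {A : Type*} [CommRing A] [Lattice A] (I : Ideal A) : Prop :=
  ∀ a b : A, b ∈ I → a ⊔ -a ≤ b ⊔ -b → a ∈ I

/-- An archimedean ℓ-ideal: whenever `(n • a - b)⁺ ∈ I` for every integer `n ≥ 1`,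
also `a⁺ ∈ I`, where `x⁺ = x ⊔ 0`. -/
def IsArchLIdeal {A : Type*} [CommRing A] [Lattice A] (I : Ideal A) : Prop :=
  ∀ a b : A, (∀ n : ℕ, 1 ≤ n → (n • a - b) ⊔ 0 ∈ I) → a ⊔ 0 ∈ I

/-- The archimedean hull of a subset `S`: the intersection of all archimedean
ℓ-ideals containing `S`. -/
def archHull {A : Type*} [CommRing A] [Lattice A] (S : Set A) : Ideal A :=
  sInf {I : Ideal A | IsLIdeal I ∧ IsArchLIdeal I ∧ S ⊆ ↑I}

namespace IsBal

variable {A : Type*} [CommRing A] [Lattice A] [Algebra ℝ A]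

theorem isOrderedAddMonoid (hA : IsBal A) : IsOrderedAddMonoid A where
  add_le_add_left := hA.add_le_add_right

theorem isOrderedRing (hA : IsBal A) : IsOrderedRing A :=
  have := hA.isOrderedAddMonoid
  have : ZeroLEOneClass A := ⟨by simpa using hA.algebraMap_mono zero_le_one⟩
  .of_mul_nonneg hA.mul_nonneg

theorem isOrderedModule (hA : IsBal A) : IsOrderedModule ℝ A :=
  have := hA.isOrderedAddMonoid
  .of_smul_nonneg fun r hr a ha => by
    rw [Algebra.smul_def]
    exact hA.mul_nonneg _ _ (by simpa using hA.algebraMap_mono hr) ha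

end IsBal

section LatticeOrderedRing

variable {A : Type*} [CommRing A] [Lattice A] [IsOrderedRing A]

theorem abs_mul_le_abs_mul_abs (a b : A) : |a * b| ≤ |a| * |b| := by
  rw [← posPart_add_negPart a, ← posPart_add_negPart b]
  conv_lhs => rw [← posPart_sub_negPart a, ← posPart_sub_negPart b]
  have h₁ := mul_nonneg (posPart_nonneg a) (negPart_nonneg b)
  have h₂ := mul_nonneg (negPart_nonneg a) (posPart_nonneg b)
  have h₃ := mul_nonneg (posPart_nonneg a) (posPart_nonneg b)
  have h₄ := mul_nonneg (negPart_nonneg a) (negPart_nonneg b)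
  -- `|a| |b| ∓ a b` is twice a sum of two of these products.
  refine sup_le ?_ ?_
  · linear_combination h₁ + h₁ + h₂ + h₂
  · linear_combination h₃ + h₃ + h₄ + h₄

theorem IsLIdeal.abs_mem {I : Ideal A} (hI : IsLIdeal I) {a : A} (ha : a ∈ I) : |a| ∈ I :=
  hI |a| a ha (abs_abs a).le

end LatticeOrderedRing

section UniformClosure

variable {A : Type*} [CommRing A] [Lattice A] [IsOrderedRing A] [Algebra ℝ A]
  [IsOrderedModule ℝ A]

theorem exists_abs_le_smul_one (hunit : ∀ a : A, ∃ n : ℕ, a ≤ n • (1 : A)) (a : A) :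
    ∃ K : ℝ, 0 < K ∧ |a| ≤ K • (1 : A) := by
  obtain ⟨n, hn⟩ := hunit |a|
  refine ⟨n + 1, by positivity, hn.trans ?_⟩
  rw [← Nat.cast_smul_eq_nsmul ℝ]
  exact smul_le_smul_of_nonneg_right (by linarith) zero_le_one

theorem posPart_le_inv_smul {n : ℕ} (hn : n ≠ 0) (a b : A) :
    a⁺ ≤ (n : ℝ)⁻¹ • ((n • a - b)⁺ + |b|) := by
  refine sup_le ?_ (smul_nonneg (by positivity) (add_nonneg (posPart_nonneg _) (abs_nonneg b)))
  calc a = (n : ℝ)⁻¹ • (n • a - b + b) := by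
        rw [sub_add_cancel, ← Nat.cast_smul_eq_nsmul ℝ, inv_smul_smul₀ (by exact_mod_cast hn)]
    _ ≤ (n : ℝ)⁻¹ • ((n • a - b)⁺ + |b|) := by
        gcongr
        exacts [le_posPart _, le_abs_self b]

/-- For an ℓ-ideal `I` this is the uniform closure of `I`: `a` is within `ε` of some element
of `I` iff `|a| ≤ b + ε` for some `b ∈ I`. -/
def uniformClosure (hunit : ∀ a : A, ∃ n : ℕ, a ≤ n • (1 : A)) (I : Ideal A) : Ideal A where
  carrier := {a | ∀ ε : ℝ, 0 < ε → ∃ b ∈ I, |a| ≤ b + ε • 1}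
  zero_mem' _ hε := ⟨0, I.zero_mem, by simpa using smul_nonneg hε.le zero_le_one⟩
  add_mem' {a a'} ha ha' ε hε := by
    obtain ⟨b, hb, hab⟩ := ha (ε / 2) (by positivity)
    obtain ⟨b', hb', hab'⟩ := ha' (ε / 2) (by positivity)
    refine ⟨b + b', I.add_mem hb hb', ?_⟩
    calc |a + a'| ≤ |a| + |a'| := abs_add_le a a'
      _ ≤ b + (ε / 2) • 1 + (b' + (ε / 2) • 1) := add_le_add hab hab'
      _ = b + b' + ε • 1 := by rw [add_add_add_comm, ← add_smul, add_halves]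
  smul_mem' c a ha ε hε := by
    obtain ⟨K, hK, hcK⟩ := exists_abs_le_smul_one hunit c
    obtain ⟨b, hb, hab⟩ := ha (ε / K) (by positivity)
    refine ⟨K • b, I.smul_of_tower_mem K hb, ?_⟩
    calc |c • a| ≤ |c| * |a| := abs_mul_le_abs_mul_abs c a
      _ ≤ K • |a| := by
        rw [← smul_one_mul]
        exact mul_le_mul_of_nonneg_right hcK (abs_nonneg a)
      _ ≤ K • (b + (ε / K) • 1) := smul_le_smul_of_nonneg_left hab hK.le
      _ = K • b + ε • 1 := by rw [smul_add, smul_smul, mul_div_cancel₀ ε hK.ne']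

variable (hunit : ∀ a : A, ∃ n : ℕ, a ≤ n • (1 : A)) {I : Ideal A}

theorem subset_uniformClosure (hI : IsLIdeal I) : (I : Set A) ⊆ uniformClosure hunit I :=
  fun a ha _ hε => ⟨|a|, hI.abs_mem ha, le_add_of_nonneg_right (smul_nonneg hε.le zero_le_one)⟩

theorem isLIdeal_uniformClosure : IsLIdeal (uniformClosure hunit I) := by
  intro a b hb hab ε hε
  obtain ⟨c, hc, hbc⟩ := hb ε hε
  exact ⟨c, hc, le_trans hab hbc⟩

theorem isArchLIdeal_uniformClosure : IsArchLIdeal (uniformClosure hunit I) := by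
  intro a b hab ε hε
  obtain ⟨K, hK, hbK⟩ := exists_abs_le_smul_one hunit b
  obtain ⟨n, hn⟩ := exists_nat_gt ((1 + K) / ε)
  have hn₀ : (0 : ℝ) < n := lt_trans (by positivity) hn
  obtain ⟨c, hc, hpc⟩ := hab n (by exact_mod_cast hn₀) 1 one_pos
  refine ⟨(n : ℝ)⁻¹ • c, I.smul_of_tower_mem _ hc, ?_⟩
  rw [abs_of_nonneg le_sup_right] at hpc ⊢
  calc a⁺ ≤ (n : ℝ)⁻¹ • ((n • a - b)⁺ + |b|) := posPart_le_inv_smul (by exact_mod_cast hn₀.ne') ..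
    _ ≤ (n : ℝ)⁻¹ • (c + (1 : ℝ) • 1 + K • 1) := by gcongr; exact hpc
    _ = (n : ℝ)⁻¹ • c + ((n : ℝ)⁻¹ * (1 + K)) • 1 := by
        rw [add_assoc, ← add_smul, smul_add, smul_smul]
    _ ≤ (n : ℝ)⁻¹ • c + ε • 1 := by
        gcongr
        rw [inv_mul_le_iff₀ hn₀]
        exact ((div_lt_iff₀ hε).1 hn).le

theorem one_mem_of_one_mem_uniformClosure (hI : IsLIdeal I)
    (h : (1 : A) ∈ uniformClosure hunit I) : (1 : A) ∈ I := by
  obtain ⟨b, hb, h1b⟩ := h (1 / 2) one_half_pos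
  rw [abs_of_nonneg zero_le_one] at h1b
  have h1bb : (1 : A) ≤ b + b := by
    refine le_of_add_le_add_right (a := 1) ?_
    calc (1 : A) + 1 ≤ b + (1 / 2 : ℝ) • 1 + (b + (1 / 2 : ℝ) • 1) := add_le_add h1b h1b
      _ = b + b + 1 := by rw [add_add_add_comm, ← add_smul, add_halves, one_smul]
  exact hI 1 (b + b) (I.add_mem hb hb) (abs_le_abs_of_nonneg zero_le_one h1bb)

end UniformClosure

/-- In a bal-algebra, if the archimedean hull of an ℓ-ideal `I` is all of `A`,
then `I = A`. -/
theorem eq_top_of_archHull_eq_top {A : Type*} [CommRing A] [Lattice A] [Algebra ℝ A]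
    (hA : IsBal A) (I : Ideal A) (hI : IsLIdeal I)
    (h : archHull (I : Set A) = ⊤) : I = ⊤ := by
  have := hA.isOrderedRing
  have := hA.isOrderedModule
  have hunit : ∀ a : A, ∃ n : ℕ, a ≤ n • (1 : A) := fun a =>
    (hA.strong_unit a).imp fun _ => And.right
  have hle : archHull (I : Set A) ≤ uniformClosure hunit I :=
    sInf_le ⟨isLIdeal_uniformClosure hunit, isArchLIdeal_uniformClosure hunit,
      subset_uniformClosure hunit hI⟩
  exact (Ideal.eq_top_iff_one I).2 <|
    one_mem_of_one_mem_uniformClosure hunit hI (hle (h ▸ Submodule.mem_top))
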